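/- arXiv:math/0008227 — 5 statements merged into one kernel-verified Lean document; each statement's English description precedes it below -/
import Mathlib

section
/- For every element a of A, the identity μ∘(Π₁⊗Π₂)∘Δ(a) = a holds; in Sweedler notation, Σ Π₁(a′)·Π₂(a″) = a. (In particular the maps Π₁ and Π₂ are well-defined linear projections of A onto A₁ and A₂ respectively.) -/
open TensorProduct

/-- Let `A` be a bialgebra over a field `k`, let `A₁`, `A₂` be subalgebras
such that the multiplication map `μ : A₁ ⊗ A₂ → A` is a linear isomorphism, `A₁` is a left
coideal and `A₂` is a right coideal.  Let `P₁`, `P₂` be the linear projections determined by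
`P₁(a₁a₂) = ε(a₂)·a₁`, `P₂(a₁a₂) = ε(a₁)·a₂`.  Then `μ ∘ (P₁ ⊗ P₂) ∘ Δ (a) = a` for every
`a ∈ A`. -/
theorem stmt0 (k A : Type*) [Field k] [Ring A] [Bialgebra k A]
    (A₁ A₂ : Subalgebra k A)
    (hμ : Function.Bijective
      (Submodule.mulMap (Subalgebra.toSubmodule A₁) (Subalgebra.toSubmodule A₂)))
    (hA₁ : ∀ a ∈ A₁, Coalgebra.comul (R := k) a ∈
      LinearMap.range (TensorProduct.map (LinearMap.id : A →ₗ[k] A)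
        (Subalgebra.toSubmodule A₁).subtype))
    (hA₂ : ∀ a ∈ A₂, Coalgebra.comul (R := k) a ∈
      LinearMap.range (TensorProduct.map (Subalgebra.toSubmodule A₂).subtype
        (LinearMap.id : A →ₗ[k] A)))
    (P₁ P₂ : A →ₗ[k] A)
    (hP₁ : ∀ a₁ ∈ A₁, ∀ a₂ ∈ A₂, P₁ (a₁ * a₂) = Coalgebra.counit (R := k) a₂ • a₁)
    (hP₂ : ∀ a₁ ∈ A₁, ∀ a₂ ∈ A₂, P₂ (a₁ * a₂) = Coalgebra.counit (R := k) a₁ • a₂)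
    (a : A) :
    LinearMap.mul' k A (TensorProduct.map P₁ P₂ (Coalgebra.comul (R := k) a)) = a := by
  set M := Subalgebra.toSubmodule A₁ with hM
  set N := Subalgebra.toSubmodule A₂ with hN
  have htop : (M * N : Submodule k A) = ⊤ := by
    rw [← Submodule.mulMap_range]
    exact LinearMap.range_eq_top.mpr hμ.surjective
  have hmem : ∀ x : A, x ∈ M * N := fun x => htop ▸ Submodule.mem_top
  -- P₁ is right A₂-semi-invariant
  have L1 : ∀ (b : A), ∀ c ∈ A₂, P₁ (b * c) = Coalgebra.counit (R := k) c • P₁ b := by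
    intro b c hc
    refine Submodule.mul_induction_on (hmem b) ?_ ?_
    · intro x hx y hy
      rw [mul_assoc, hP₁ x hx (y * c) (mul_mem hy hc), hP₁ x hx y hy,
        Bialgebra.counit_mul, smul_smul, mul_comm]
    · intro b₁ b₂ h1 h2
      rw [add_mul, map_add, h1, h2, map_add, smul_add]
  -- P₂ is left A₁-semi-invariant
  have L2 : ∀ (b : A), ∀ c ∈ A₁, P₂ (c * b) = Coalgebra.counit (R := k) c • P₂ b := by
    intro b c hc
    refine Submodule.mul_induction_on (hmem b) ?_ ?_
    · intro x hx y hy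
      rw [← mul_assoc, hP₂ (c * x) (mul_mem hc hx) y hy, hP₂ x hx y hy,
        Bialgebra.counit_mul, smul_smul]
    · intro b₁ b₂ h1 h2
      rw [mul_add, map_add, h1, h2, map_add, smul_add]
  have hfix₁ : ∀ x ∈ A₁, P₁ x = x := by
    intro x hx
    have := hP₁ x hx 1 (one_mem _)
    simpa using this
  have hfix₂ : ∀ y ∈ A₂, P₂ y = y := by
    intro y hy
    have := hP₂ 1 (one_mem _) y hy
    simpa using this
  -- counit restricted to the subalgebras
  set e₁ : M →ₗ[k] k := (Coalgebra.counit (R := k)) ∘ₗ M.subtype with he₁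
  set e₂ : N →ₗ[k] k := (Coalgebra.counit (R := k)) ∘ₗ N.subtype with he₂
  -- the key bilinear identity
  have key : ∀ (u : A ⊗[k] M) (v : N ⊗[k] A),
      LinearMap.mul' k A (TensorProduct.map P₁ P₂
        ((TensorProduct.map (LinearMap.id : A →ₗ[k] A) M.subtype u) *
         (TensorProduct.map N.subtype (LinearMap.id : A →ₗ[k] A) v))) =
      P₁ ((TensorProduct.rid k A) (TensorProduct.map (LinearMap.id : A →ₗ[k] A) e₁ u)) *
      P₂ ((TensorProduct.lid k A) (TensorProduct.map e₂ (LinearMap.id : A →ₗ[k] A) v)) := by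
    intro u v
    induction u using TensorProduct.induction_on with
    | zero => simp
    | add u₁ u₂ h1 h2 => simp only [map_add, add_mul]; rw [h1, h2]
    | tmul x' x₁ =>
      induction v using TensorProduct.induction_on with
      | zero => simp
      | add v₁ v₂ h1 h2 => simp only [map_add, mul_add]; rw [h1, h2]
      | tmul y₁ y'' =>
        simp only [TensorProduct.map_tmul, LinearMap.id_coe, id_eq,
          Algebra.TensorProduct.tmul_mul_tmul, LinearMap.mul'_apply,
          TensorProduct.rid_tmul, TensorProduct.lid_tmul, he₁, he₂,
          LinearMap.comp_apply, Submodule.coe_subtype]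
        rw [L1 x' y₁ y₁.2, L2 y'' x₁ x₁.2, map_smul, map_smul,
          smul_mul_assoc, mul_smul_comm, smul_smul, smul_mul_assoc,
          mul_smul_comm, smul_smul, mul_comm]
  -- reduce to products
  refine Submodule.mul_induction_on (hmem a) ?_ ?_
  · intro x hx y hy
    obtain ⟨tx, htx⟩ := hA₁ x hx
    obtain ⟨ty, hty⟩ := hA₂ y hy
    rw [Bialgebra.comul_mul, ← htx, ← hty, key tx ty]
    have hcx : (TensorProduct.map (LinearMap.id : A →ₗ[k] A) e₁) tx =
        (Coalgebra.counit (R := k)).lTensor A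
          ((TensorProduct.map (LinearMap.id : A →ₗ[k] A) M.subtype) tx) := by
      rw [← LinearMap.comp_apply]
      congr 1
      apply TensorProduct.ext'
      intro m n
      simp [he₁]
    have hcy : (TensorProduct.map e₂ (LinearMap.id : A →ₗ[k] A)) ty =
        (Coalgebra.counit (R := k)).rTensor A
          ((TensorProduct.map N.subtype (LinearMap.id : A →ₗ[k] A)) ty) := by
      rw [← LinearMap.comp_apply]
      congr 1
      apply TensorProduct.ext'
      intro m n
      simp [he₂]
    rw [hcx, hcy, htx, hty, Coalgebra.lTensor_counit_comul, Coalgebra.rTensor_counit_comul]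
    simp only [TensorProduct.rid_tmul, TensorProduct.lid_tmul, one_smul]
    rw [hfix₁ x hx, hfix₂ y hy]
  · intro b c hb hc
    rw [map_add, map_add, map_add, hb, hc]
end

section
/- The linear map φ: A → A defined by φ(a) = Σ Π₁(a′)·Π₂(a″) is a morphism of left A₁-modules and of right A₂-modules: φ(a₁·a) = a₁·φ(a) and φ(a·a₂) = φ(a)·a₂ for all a ∈ A, a₁ ∈ A₁, a₂ ∈ A₂; moreover φ(1) = 1. -/
open TensorProduct

/-- With `A₁`, `A₂`, `Π₁`, `Π₂` as in the biorthogonal decomposition setup,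
the map `φ(a) = Π₁(a′)·Π₂(a″)` (i.e. `φ = μ ∘ (Π₁ ⊗ Π₂) ∘ Δ`) is a morphism of left
`A₁`-modules and of right `A₂`-modules, and `φ(1) = 1`. -/
theorem stmt1 (k A : Type*) [Field k] [Ring A] [Bialgebra k A]
    (A₁ A₂ : Subalgebra k A)
    (hμ : Function.Bijective
      (Submodule.mulMap (Subalgebra.toSubmodule A₁) (Subalgebra.toSubmodule A₂)))
    (hA₁ : ∀ a ∈ A₁, Coalgebra.comul (R := k) a ∈
      LinearMap.range (TensorProduct.map (LinearMap.id : A →ₗ[k] A)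
        (Subalgebra.toSubmodule A₁).subtype))
    (hA₂ : ∀ a ∈ A₂, Coalgebra.comul (R := k) a ∈
      LinearMap.range (TensorProduct.map (Subalgebra.toSubmodule A₂).subtype
        (LinearMap.id : A →ₗ[k] A)))
    (P₁ P₂ : A →ₗ[k] A)
    (hP₁ : ∀ a₁ ∈ A₁, ∀ a₂ ∈ A₂, P₁ (a₁ * a₂) = Coalgebra.counit (R := k) a₂ • a₁)
    (hP₂ : ∀ a₁ ∈ A₁, ∀ a₂ ∈ A₂, P₂ (a₁ * a₂) = Coalgebra.counit (R := k) a₁ • a₂)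
    (φ : A → A)
    (hφ : ∀ a : A, φ a = LinearMap.mul' k A
      (TensorProduct.map P₁ P₂ (Coalgebra.comul (R := k) a))) :
    (∀ a₁ ∈ A₁, ∀ a : A, φ (a₁ * a) = a₁ * φ a) ∧
    (∀ a₂ ∈ A₂, ∀ a : A, φ (a * a₂) = φ a * a₂) ∧
    φ 1 = 1 := by
  -- P₁ is left A₁-linear
  have L1 : ∀ a₁ ∈ A₁, ∀ x : A, P₁ (a₁ * x) = a₁ * P₁ x := by
    intro a₁ h₁ x
    obtain ⟨t, rfl⟩ := hμ.2 x
    induction t using TensorProduct.induction_on with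
    | zero => simp
    | tmul b₁ b₂ =>
        rw [Submodule.mulMap_tmul, ← mul_assoc, hP₁ _ (mul_mem h₁ b₁.2) _ b₂.2,
          hP₁ _ b₁.2 _ b₂.2, mul_smul_comm]
    | add y z hy hz => simp only [map_add, mul_add, hy, hz]
  -- P₂ kills A₁ on the left via counit
  have L2 : ∀ a₁ ∈ A₁, ∀ x : A,
      P₂ (a₁ * x) = Coalgebra.counit (R := k) a₁ • P₂ x := by
    intro a₁ h₁ x
    obtain ⟨t, rfl⟩ := hμ.2 x
    induction t using TensorProduct.induction_on with
    | zero => simp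
    | tmul b₁ b₂ =>
        rw [Submodule.mulMap_tmul, ← mul_assoc, hP₂ _ (mul_mem h₁ b₁.2) _ b₂.2,
          hP₂ _ b₁.2 _ b₂.2, Bialgebra.counit_mul, mul_smul]
    | add y z hy hz => simp only [map_add, mul_add, hy, hz, smul_add]
  -- P₂ is right A₂-linear
  have L3 : ∀ a₂ ∈ A₂, ∀ x : A, P₂ (x * a₂) = P₂ x * a₂ := by
    intro a₂ h₂ x
    obtain ⟨t, rfl⟩ := hμ.2 x
    induction t using TensorProduct.induction_on with
    | zero => simp
    | tmul b₁ b₂ =>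
        rw [Submodule.mulMap_tmul, mul_assoc, hP₂ _ b₁.2 _ (mul_mem b₂.2 h₂),
          hP₂ _ b₁.2 _ b₂.2, smul_mul_assoc]
    | add y z hy hz => simp only [map_add, add_mul, hy, hz]
  -- P₁ kills A₂ on the right via counit
  have L4 : ∀ a₂ ∈ A₂, ∀ x : A,
      P₁ (x * a₂) = Coalgebra.counit (R := k) a₂ • P₁ x := by
    intro a₂ h₂ x
    obtain ⟨t, rfl⟩ := hμ.2 x
    induction t using TensorProduct.induction_on with
    | zero => simp
    | tmul b₁ b₂ =>
        rw [Submodule.mulMap_tmul, mul_assoc, hP₁ _ b₁.2 _ (mul_mem b₂.2 h₂),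
          hP₁ _ b₁.2 _ b₂.2, Bialgebra.counit_mul, mul_comm, mul_smul]
    | add y z hy hz => simp only [map_add, add_mul, hy, hz, smul_add]
  refine ⟨?_, ?_, ?_⟩
  · -- left A₁-linearity of φ
    intro a₁ h₁ a
    rw [hφ, hφ, Bialgebra.comul_mul]
    obtain ⟨t, ht⟩ := hA₁ a₁ h₁
    have key : ∀ (w : A ⊗[k] (Subalgebra.toSubmodule A₁)) (c d : A),
        LinearMap.mul' k A (TensorProduct.map P₁ P₂
          ((TensorProduct.map (LinearMap.id : A →ₗ[k] A)
            (Subalgebra.toSubmodule A₁).subtype w) * (c ⊗ₜ[k] d))) =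
        P₁ ((TensorProduct.rid k A)
          ((LinearMap.lTensor A (Coalgebra.counit (R := k)))
            (TensorProduct.map (LinearMap.id : A →ₗ[k] A)
              (Subalgebra.toSubmodule A₁).subtype w)) * c) * P₂ d := by
      intro w c d
      induction w using TensorProduct.induction_on with
      | zero => simp
      | tmul u v =>
          simp only [TensorProduct.map_tmul, LinearMap.id_coe, id_eq,
            Submodule.subtype_apply, Algebra.TensorProduct.tmul_mul_tmul,
            LinearMap.mul'_apply, LinearMap.lTensor_tmul, TensorProduct.rid_tmul]
          rw [L2 _ v.2]
          simp only [map_smul, mul_smul_comm, smul_mul_assoc]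
      | add y z hy hz =>
          simp only [map_add, add_mul, hy, hz]
    have hta : (TensorProduct.rid k A)
        ((LinearMap.lTensor A (Coalgebra.counit (R := k)))
          (TensorProduct.map (LinearMap.id : A →ₗ[k] A)
            (Subalgebra.toSubmodule A₁).subtype t)) = a₁ := by
      rw [ht, Coalgebra.lTensor_counit_comul, TensorProduct.rid_tmul, one_smul]
    induction Coalgebra.comul (R := k) a using TensorProduct.induction_on with
    | zero => simp
    | tmul c d =>
        rw [← ht, key, hta, L1 _ h₁, mul_assoc, TensorProduct.map_tmul,
          LinearMap.mul'_apply]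
    | add y z hy hz =>
        simp only [mul_add, map_add, hy, hz]
  · -- right A₂-linearity of φ
    intro a₂ h₂ a
    rw [hφ, hφ, Bialgebra.comul_mul]
    obtain ⟨t, ht⟩ := hA₂ a₂ h₂
    have key : ∀ (w : (Subalgebra.toSubmodule A₂) ⊗[k] A) (c d : A),
        LinearMap.mul' k A (TensorProduct.map P₁ P₂
          ((c ⊗ₜ[k] d) * (TensorProduct.map (Subalgebra.toSubmodule A₂).subtype
            (LinearMap.id : A →ₗ[k] A) w))) =
        P₁ c * P₂ (d * (TensorProduct.lid k A)
          ((LinearMap.rTensor A (Coalgebra.counit (R := k)))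
            (TensorProduct.map (Subalgebra.toSubmodule A₂).subtype
              (LinearMap.id : A →ₗ[k] A) w))) := by
      intro w c d
      induction w using TensorProduct.induction_on with
      | zero => simp
      | tmul u v =>
          simp only [TensorProduct.map_tmul, LinearMap.id_coe, id_eq,
            Submodule.subtype_apply, Algebra.TensorProduct.tmul_mul_tmul,
            LinearMap.mul'_apply, LinearMap.rTensor_tmul, TensorProduct.lid_tmul]
          rw [L4 _ u.2]
          simp only [map_smul, mul_smul_comm, smul_mul_assoc]
      | add y z hy hz =>
          simp only [map_add, mul_add, hy, hz]
    have hta : (TensorProduct.lid k A)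
        ((LinearMap.rTensor A (Coalgebra.counit (R := k)))
          (TensorProduct.map (Subalgebra.toSubmodule A₂).subtype
            (LinearMap.id : A →ₗ[k] A) t)) = a₂ := by
      rw [ht, Coalgebra.rTensor_counit_comul, TensorProduct.lid_tmul, one_smul]
    induction Coalgebra.comul (R := k) a using TensorProduct.induction_on with
    | zero => simp
    | tmul c d =>
        rw [← ht, key, hta, L3 _ h₂, ← mul_assoc, TensorProduct.map_tmul,
          LinearMap.mul'_apply]
    | add y z hy hz =>
        simp only [add_mul, map_add, hy, hz]
  · -- φ 1 = 1
    have h1 : P₁ (1 : A) = 1 := by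
      have := hP₁ 1 (one_mem A₁) 1 (one_mem A₂)
      simpa using this
    have h2 : P₂ (1 : A) = 1 := by
      have := hP₂ 1 (one_mem A₁) 1 (one_mem A₂)
      simpa using this
    rw [hφ, Bialgebra.comul_one, Algebra.TensorProduct.one_def,
      TensorProduct.map_tmul, h1, h2, LinearMap.mul'_apply, one_mul]
end

section
/- The tensor of the pairing factorizes as R = R₁ · R₂ (product taken in the algebra A ⊗ B), where R₁ = (Π₁ ⊗ id)(R) and R₂ = (Π₂ ⊗ id)(R). -/
open TensorProduct

/-- The pairing `⟨·,·⟩ : A × B → k` extended to a pairing `(A ⊗ A) × (B ⊗ B) → k`,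
`⟨a₁ ⊗ a₂, b₁ ⊗ b₂⟩ = ⟨a₁,b₁⟩·⟨a₂,b₂⟩`. -/
noncomputable def pairTensor {k A B : Type*} [CommSemiring k]
    [AddCommMonoid A] [Module k A] [AddCommMonoid B] [Module k B]
    (p : A →ₗ[k] B →ₗ[k] k) : (A ⊗[k] A) →ₗ[k] (B ⊗[k] B) →ₗ[k] k :=
  (TensorProduct.dualDistrib k B B).comp (TensorProduct.map p p)

/-- Auxiliary: evaluation of a tensor `z ∈ A ⊗ B` against the pairing in the second leg,
`z = Σ x ⊗ b ↦ (a ↦ Σ ⟨a, b⟩ • x)`, bundled as a linear map in `a`. -/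
noncomputable def evR {k A B : Type*} [CommSemiring k]
    [AddCommMonoid A] [Module k A] [AddCommMonoid B] [Module k B]
    (p : A →ₗ[k] B →ₗ[k] k) (z : A ⊗[k] B) : A →ₗ[k] A where
  toFun a := TensorProduct.rid k A
    (TensorProduct.map (LinearMap.id : A →ₗ[k] A) (p a) z)
  map_add' a a' := by
    rw [map_add p, TensorProduct.map_add_right, LinearMap.add_apply, map_add]
  map_smul' c a := by
    rw [map_smul p, TensorProduct.map_smul_right, LinearMap.smul_apply, map_smul,
      RingHom.id_apply]

theorem evR_apply {k A B : Type*} [CommSemiring k]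
    [AddCommMonoid A] [Module k A] [AddCommMonoid B] [Module k B]
    (p : A →ₗ[k] B →ₗ[k] k) (z : A ⊗[k] B) (a : A) :
    evR p z a = TensorProduct.rid k A
      (TensorProduct.map (LinearMap.id : A →ₗ[k] A) (p a) z) := rfl

theorem evR_tmul {k A B : Type*} [CommSemiring k]
    [AddCommMonoid A] [Module k A] [AddCommMonoid B] [Module k B]
    (p : A →ₗ[k] B →ₗ[k] k) (x : A) (b : B) (a : A) :
    evR p (x ⊗ₜ[k] b) a = p a b • x := by
  simp [evR_apply]

theorem evR_add {k A B : Type*} [CommSemiring k]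
    [AddCommMonoid A] [Module k A] [AddCommMonoid B] [Module k B]
    (p : A →ₗ[k] B →ₗ[k] k) (z w : A ⊗[k] B) :
    evR p (z + w) = evR p z + evR p w := by
  ext a; simp [evR_apply, map_add]

theorem evR_zero {k A B : Type*} [CommSemiring k]
    [AddCommMonoid A] [Module k A] [AddCommMonoid B] [Module k B]
    (p : A →ₗ[k] B →ₗ[k] k) : evR p (0 : A ⊗[k] B) = 0 := by
  ext a; simp [evR_apply]

set_option maxHeartbeats 1000000 in
/-- Let `A`, `B` be paired bialgebras (Hopf pairing of `A` with `B` with the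
opposite comultiplication), let `R ∈ A ⊗ B` be the tensor of the pairing, and let
`A = A₁A₂` be a decomposition into a left coideal subalgebra `A₁` and a right coideal
subalgebra `A₂`, with associated projections `P₁`, `P₂`.  Then
`R = (P₁ ⊗ id)(R) · (P₂ ⊗ id)(R)` in the algebra `A ⊗ B`. -/
theorem stmt2 (k A B : Type*) [Field k] [Ring A] [Bialgebra k A] [Ring B] [Bialgebra k B]
    (p : A →ₗ[k] B →ₗ[k] k)
    -- Hopf pairing axioms
    (hpB : ∀ (a : A) (b₁ b₂ : B), p a (b₁ * b₂) =
      pairTensor p (Coalgebra.comul (R := k) a) (b₁ ⊗ₜ[k] b₂))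
    (hpA : ∀ (a₁ a₂ : A) (b : B), p (a₁ * a₂) b =
      pairTensor p (a₂ ⊗ₜ[k] a₁) (Coalgebra.comul (R := k) b))
    (hp1B : ∀ b : B, p 1 b = Coalgebra.counit (R := k) b)
    (hp1A : ∀ a : A, p a 1 = Coalgebra.counit (R := k) a)
    -- nondegeneracy
    (hndA : ∀ a : A, (∀ b : B, p a b = 0) → a = 0)
    (hndB : ∀ b : B, (∀ a : A, p a b = 0) → b = 0)
    -- the tensor of the pairing
    (R : A ⊗[k] B)
    (hRA : ∀ a : A, TensorProduct.rid k A
      (TensorProduct.map (LinearMap.id : A →ₗ[k] A) (p a) R) = a)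
    (hRB : ∀ b : B, TensorProduct.lid k B
      (TensorProduct.map (p.flip b) (LinearMap.id : B →ₗ[k] B) R) = b)
    -- the decomposition A = A₁ A₂
    (A₁ A₂ : Subalgebra k A)
    (hμ : Function.Bijective
      (Submodule.mulMap (Subalgebra.toSubmodule A₁) (Subalgebra.toSubmodule A₂)))
    (hA₁ : ∀ a ∈ A₁, Coalgebra.comul (R := k) a ∈
      LinearMap.range (TensorProduct.map (LinearMap.id : A →ₗ[k] A)
        (Subalgebra.toSubmodule A₁).subtype))
    (hA₂ : ∀ a ∈ A₂, Coalgebra.comul (R := k) a ∈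
      LinearMap.range (TensorProduct.map (Subalgebra.toSubmodule A₂).subtype
        (LinearMap.id : A →ₗ[k] A)))
    (P₁ P₂ : A →ₗ[k] A)
    (hP₁ : ∀ a₁ ∈ A₁, ∀ a₂ ∈ A₂, P₁ (a₁ * a₂) = Coalgebra.counit (R := k) a₂ • a₁)
    (hP₂ : ∀ a₁ ∈ A₁, ∀ a₂ ∈ A₂, P₂ (a₁ * a₂) = Coalgebra.counit (R := k) a₁ • a₂) :
    R = TensorProduct.map P₁ (LinearMap.id : B →ₗ[k] B) R *
        TensorProduct.map P₂ (LinearMap.id : B →ₗ[k] B) R := by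
  classical
  set cu : A →ₗ[k] k := Coalgebra.counit (R := k) with hcu
  set ι₁ : (Subalgebra.toSubmodule A₁) →ₗ[k] A := (Subalgebra.toSubmodule A₁).subtype
  set ι₂ : (Subalgebra.toSubmodule A₂) →ₗ[k] A := (Subalgebra.toSubmodule A₂).subtype
  -- generalized projection formulas
  have L1 : ∀ a₁ ∈ A₁, ∀ x : A, P₂ (a₁ * x) = cu a₁ • P₂ x := by
    intro a₁ h₁ x
    obtain ⟨z, rfl⟩ := hμ.2 x
    induction z using TensorProduct.induction_on with
    | zero => simp
    | tmul u v =>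
      rw [Submodule.mulMap_tmul, ← mul_assoc,
        hP₂ _ (mul_mem h₁ u.2) _ v.2, hP₂ _ u.2 _ v.2]
      rw [hcu, Bialgebra.counit_mul, mul_smul]
    | add z w hz hw =>
      rw [map_add, mul_add, map_add, hz, hw, map_add, smul_add]
  have L2 : ∀ a₂ ∈ A₂, ∀ x : A, P₁ (x * a₂) = cu a₂ • P₁ x := by
    intro a₂ h₂ x
    obtain ⟨z, rfl⟩ := hμ.2 x
    induction z using TensorProduct.induction_on with
    | zero => simp
    | tmul u v =>
      rw [Submodule.mulMap_tmul, mul_assoc,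
        hP₁ _ u.2 _ (mul_mem v.2 h₂), hP₁ _ u.2 _ v.2]
      rw [hcu, Bialgebra.counit_mul, mul_comm, mul_smul]
    | add z w hz hw =>
      rw [map_add, add_mul, map_add, hz, hw, map_add, smul_add]
  have P₁1 : ∀ u ∈ A₁, P₁ u = u := by
    intro u hu
    have := hP₁ u hu 1 (one_mem A₂)
    simpa [hcu] using this
  have P₂1 : ∀ v ∈ A₂, P₂ v = v := by
    intro v hv
    have := hP₂ 1 (one_mem A₁) v hv
    simpa [hcu] using this
  -- the factorized counit identity
  have G : ∀ (x : A ⊗[k] (Subalgebra.toSubmodule A₁))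
      (y : (Subalgebra.toSubmodule A₂) ⊗[k] A),
      LinearMap.mul' k A (TensorProduct.map P₁ P₂
        ((TensorProduct.map LinearMap.id ι₁ x) * (TensorProduct.map ι₂ LinearMap.id y)))
      = P₁ (TensorProduct.rid k A (TensorProduct.map LinearMap.id cu
            (TensorProduct.map LinearMap.id ι₁ x)))
        * P₂ (TensorProduct.lid k A (TensorProduct.map cu LinearMap.id
            (TensorProduct.map ι₂ LinearMap.id y))) := by
    intro x y
    induction x using TensorProduct.induction_on with
    | zero => simp
    | add x x' hx hx' =>
      rw [map_add, add_mul, map_add, map_add, map_add, map_add, map_add, hx, hx', add_mul]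
    | tmul c d =>
      induction y using TensorProduct.induction_on with
      | zero => simp
      | add y y' hy hy' =>
        rw [map_add, mul_add, map_add, map_add, map_add, map_add, map_add, hy, hy', mul_add]
      | tmul e f =>
        simp only [TensorProduct.map_tmul, LinearMap.id_coe, id_eq,
          Algebra.TensorProduct.tmul_mul_tmul, LinearMap.mul'_apply,
          TensorProduct.rid_tmul, TensorProduct.lid_tmul, map_smul]
        rw [L2 (ι₂ e) e.2 c, L1 (ι₁ d) d.2 f]
        rw [smul_mul_assoc, mul_smul_comm, smul_mul_assoc, mul_smul_comm,
          smul_smul, smul_smul, mul_comm]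
  -- the key identity  μ ∘ (P₁ ⊗ P₂) ∘ Δ = id
  have KEY : ∀ a : A,
      LinearMap.mul' k A (TensorProduct.map P₁ P₂ (Coalgebra.comul (R := k) a)) = a := by
    intro a
    obtain ⟨z, rfl⟩ := hμ.2 a
    induction z using TensorProduct.induction_on with
    | zero => simp
    | add z w hz hw => rw [map_add, map_add, map_add, map_add, hz, hw]
    | tmul u v =>
      rw [Submodule.mulMap_tmul, Bialgebra.comul_mul]
      obtain ⟨x, hx⟩ := hA₁ u u.2
      obtain ⟨y, hy⟩ := hA₂ v v.2
      rw [← hx, ← hy, G x y, hx, hy]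
      have e₁ : TensorProduct.map (LinearMap.id : A →ₗ[k] A) cu
          (Coalgebra.comul (R := k) (u : A)) = (u : A) ⊗ₜ[k] (1 : k) :=
        Coalgebra.lTensor_counit_comul (R := k) (u : A)
      have e₂ : TensorProduct.map cu (LinearMap.id : A →ₗ[k] A)
          (Coalgebra.comul (R := k) (v : A)) = (1 : k) ⊗ₜ[k] (v : A) :=
        Coalgebra.rTensor_counit_comul (R := k) (v : A)
      rw [e₁, e₂, TensorProduct.rid_tmul, TensorProduct.lid_tmul, one_smul, one_smul,
        P₁1 _ u.2, P₂1 _ v.2]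
  -- the main computation of the evaluation of the product
  have hC : ∀ (z w : A ⊗[k] B) (a : A),
      TensorProduct.rid k A (TensorProduct.map (LinearMap.id : A →ₗ[k] A) (p a)
        ((TensorProduct.map P₁ (LinearMap.id : B →ₗ[k] B) z)
          * (TensorProduct.map P₂ (LinearMap.id : B →ₗ[k] B) w)))
      = LinearMap.mul' k A (TensorProduct.map (P₁ ∘ₗ evR p z) (P₂ ∘ₗ evR p w)
          (Coalgebra.comul (R := k) a)) := by
    intro z w a
    induction z using TensorProduct.induction_on with
    | zero =>
      rw [map_zero, zero_mul, map_zero, map_zero, evR_zero]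
      have : TensorProduct.map (P₁ ∘ₗ (0 : A →ₗ[k] A)) (P₂ ∘ₗ evR p w) = 0 := by
        ext s t; simp
      rw [this, LinearMap.zero_apply, map_zero]
    | add z z' hz hz' =>
      rw [map_add, add_mul, map_add, map_add, hz, hz', evR_add, LinearMap.comp_add,
        TensorProduct.map_add_left, LinearMap.add_apply, map_add]
    | tmul x b =>
      induction w using TensorProduct.induction_on with
      | zero =>
        rw [map_zero, mul_zero, map_zero, map_zero, evR_zero]
        have : TensorProduct.map (P₁ ∘ₗ evR p (x ⊗ₜ[k] b)) (P₂ ∘ₗ (0 : A →ₗ[k] A)) = 0 := by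
          ext s t; simp
        rw [this, LinearMap.zero_apply, map_zero]
      | add w w' hw hw' =>
        rw [map_add, mul_add, map_add, map_add, hw, hw', evR_add, LinearMap.comp_add,
          TensorProduct.map_add_right, LinearMap.add_apply, map_add]
      | tmul y c =>
        simp only [TensorProduct.map_tmul, LinearMap.id_coe, id_eq,
          Algebra.TensorProduct.tmul_mul_tmul, TensorProduct.rid_tmul]
        rw [hpB a b c]
        induction Coalgebra.comul (R := k) a using TensorProduct.induction_on with
        | zero => simp
        | add D D' hD hD' =>
          rw [map_add, LinearMap.add_apply, add_smul, map_add, hD, hD', map_add]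
        | tmul s t =>
          simp only [pairTensor, LinearMap.comp_apply, TensorProduct.map_tmul,
            TensorProduct.dualDistrib_apply, LinearMap.mul'_apply, evR_tmul, map_smul]
          rw [smul_mul_assoc, mul_smul_comm, smul_smul, mul_smul]
  -- evR p R = id
  have hER : evR p R = LinearMap.id := LinearMap.ext fun a => hRA a
  -- evaluation of the product is evaluation of R
  have hprod : ∀ a : A,
      TensorProduct.rid k A (TensorProduct.map (LinearMap.id : A →ₗ[k] A) (p a)
        ((TensorProduct.map P₁ (LinearMap.id : B →ₗ[k] B) R)
          * (TensorProduct.map P₂ (LinearMap.id : B →ₗ[k] B) R))) = a := by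
    intro a
    rw [hC R R a, hER, LinearMap.comp_id, LinearMap.comp_id, KEY a]
  -- injectivity of the total evaluation map
  have hinj : ∀ z : A ⊗[k] B,
      (∀ a : A, TensorProduct.rid k A
        (TensorProduct.map (LinearMap.id : A →ₗ[k] A) (p a) z) = 0) → z = 0 := by
    intro z hz
    let ℬ := Module.Basis.ofVectorSpace k A
    let e : (A ⊗[k] B) ≃ₗ[k] (Module.Basis.ofVectorSpaceIndex k A →₀ B) :=
      (TensorProduct.congr ℬ.repr (LinearEquiv.refl k B)).trans
        (TensorProduct.finsuppScalarLeft k B _)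
    have hcomp : ∀ (z : A ⊗[k] B) (a : A) (i : Module.Basis.ofVectorSpaceIndex k A),
        p a (e z i) = ℬ.repr (TensorProduct.rid k A
          (TensorProduct.map (LinearMap.id : A →ₗ[k] A) (p a) z)) i := by
      intro z a i
      induction z using TensorProduct.induction_on with
      | zero => simp
      | add z w hz hw =>
        simp only [map_add, Finsupp.add_apply, hz, hw]
      | tmul x b =>
        simp only [e, LinearEquiv.trans_apply, TensorProduct.congr_tmul,
          LinearEquiv.refl_apply, TensorProduct.finsuppScalarLeft_apply_tmul_apply,
          TensorProduct.map_tmul, LinearMap.id_coe, id_eq, TensorProduct.rid_tmul,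
          map_smul, Finsupp.smul_apply, smul_eq_mul]
        rw [mul_comm]
    have he : e z = 0 := by
      ext i
      apply hndB
      intro a
      rw [hcomp z a i, hz a, map_zero, Finsupp.zero_apply]
    have : z = 0 := by
      have := e.map_eq_zero_iff.mp he
      exact this
    exact this
  -- conclusion
  have hsub : R - TensorProduct.map P₁ (LinearMap.id : B →ₗ[k] B) R *
      TensorProduct.map P₂ (LinearMap.id : B →ₗ[k] B) R = 0 := by
    apply hinj
    intro a
    rw [map_sub, map_sub, hRA a, hprod a, sub_self]
  exact sub_eq_zero.mp hsub
end

section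
/- For every complex number q with |q| < 1 and every integer n ≥ 1, the family λ ↦ C_λ(q)·q^{4(λ₁ + 2λ₂ + ⋯ + nλ_n)}, indexed by weakly decreasing n-tuples λ₁ ≥ λ₂ ≥ ⋯ ≥ λ_n ≥ 0 of nonnegative integers, is summable, and 1/((n)_{q²}! · (n+1)_{q²}!) = (1 − q²)ⁿ · Σ_λ C_λ(q)·q^{4(λ₁ + 2λ₂ + ⋯ + nλ_n)}. -/
open Finset

/-- The `t`-factorial `(k)_t! = ∏_{j=1}^{k} (1 - t^j)/(1 - t)`, with `(0)_t! = 1`. -/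
noncomputable def qFactorial (t : ℂ) (k : ℕ) : ℂ :=
  ∏ j ∈ Finset.range k, (1 - t ^ (j + 1)) / (1 - t)

/-- For a weakly decreasing tuple `λ : Fin n → ℕ`, the constant
`C_λ(q) = ∏_i 1/(m_i)_{q²}!`, where `m_i` are the sizes of the maximal blocks of equal
entries of `λ` (equivalently, the multiplicities of the distinct values of `λ`). -/
noncomputable def Cpart {n : ℕ} (q : ℂ) (lam : Fin n → ℕ) : ℂ :=
  ∏ v ∈ Finset.image lam Finset.univ,
    (qFactorial (q ^ 2) ((Finset.univ.filter (fun i => lam i = v)).card))⁻¹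

/-!
Write `t = q²` and `(t;t)ₖ = (1 - t)⋯(1 - tᵏ)`, so that `(k)_t! = (t;t)ₖ / (1 - t)ᵏ`; the claim is
that the sum `Sₙ` over antitone `n`-tuples equals `(1 - t)ⁿ⁺¹ / ((t;t)ₙ (t;t)ₙ₊₁)`.
Peel off the block of minimal entries: an antitone `(n+1)`-tuple with last entry `v` whose lowest
block has `a + 1` entries is `v + 1` plus an arbitrary antitone `b`-tuple on its first `b = n - a`
places, and `v` on the rest. The weight `C_λ q^{4Σ iλᵢ}` factors accordingly, so summing over `v`
(a geometric series) gives `(1 - t^{(n+1)(n+2)}) Sₙ₊₁ = Σ_{a+b=n} t^{b(b+1)} Sᵦ / (a+1)_t!`.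
The closed form satisfies this recursion by the finite identity
`Σ_{a+b=N} t^{b(b+1)} / ((t;t)ₐ (t;t)ᵦ (t;t)ᵦ₊₁) = 1 / ((t;t)_N (t;t)_{N+1})`,
proved by induction on `N` from a Pascal-type recurrence of its terms.
-/

section qPochhammer

variable {K : Type*} [Field K]

def qPoch (t : K) (k : ℕ) : K := ∏ j ∈ range k, (1 - t ^ (j + 1))

@[simp] lemma qPoch_zero (t : K) : qPoch t 0 = 1 := prod_range_zero _

lemma qPoch_succ (t : K) (k : ℕ) : qPoch t (k + 1) = qPoch t k * (1 - t ^ (k + 1)) :=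
  prod_range_succ _ _

variable {t : K}

lemma one_sub_pow_succ_ne_zero (ht : ∀ j, t ^ (j + 1) ≠ 1) (j : ℕ) : 1 - t ^ (j + 1) ≠ 0 :=
  sub_ne_zero.2 (ht j).symm

lemma qPoch_ne_zero (ht : ∀ j, t ^ (j + 1) ≠ 1) (k : ℕ) : qPoch t k ≠ 0 :=
  prod_ne_zero_iff.2 fun j _ => one_sub_pow_succ_ne_zero ht j

def antidiagTerm (t : K) (a b : ℕ) : K :=
  t ^ (b * (b + 1)) / (qPoch t a * qPoch t b * qPoch t (b + 1))

/-- The `if`s stand for the terms with an index `-1`, which vanish as `1 / (t;t)₋₁ = 0`. -/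
lemma antidiagTerm_recurrence (ht : ∀ j, t ^ (j + 1) ≠ 1) {N a b : ℕ} (hab : a + b = N + 1) :
    (1 - t ^ (N + 1)) * (1 - t ^ (N + 2)) * antidiagTerm t a b =
      (if a = 0 then 0 else (1 - t ^ (N + b + 2)) * antidiagTerm t (a - 1) b) +
      (if b = 0 then 0 else t ^ (N + b + 1) * antidiagTerm t a (b - 1)) := by
  have h1 := one_sub_pow_succ_ne_zero ht
  rcases a with _ | a <;> rcases b with _ | b
  · omega
  · obtain rfl : b = N := by omega
    simp only [antidiagTerm, if_true, if_neg (Nat.succ_ne_zero _), zero_add, Nat.add_sub_cancel]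
    rw [qPoch_succ t (b + 1), qPoch_succ t b]
    have := h1 b; have := h1 (b + 1)
    field_simp
    ring
  · obtain rfl : a = N := by omega
    simp only [antidiagTerm, if_true, if_neg (Nat.succ_ne_zero _), add_zero, Nat.add_sub_cancel]
    rw [qPoch_succ t a]
    have := h1 a; have := h1 (a + 1)
    field_simp
  · obtain rfl : N = a + b + 1 := by omega
    simp only [antidiagTerm, if_neg (Nat.succ_ne_zero _), Nat.add_sub_cancel]
    rw [qPoch_succ t a, qPoch_succ t (b + 1), qPoch_succ t b]
    have := h1 a; have := h1 b; have := h1 (b + 1)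
    field_simp
    ring

lemma sum_antidiagonal_antidiagTerm (ht : ∀ j, t ^ (j + 1) ≠ 1) (N : ℕ) :
    ∑ p ∈ antidiagonal N, antidiagTerm t p.1 p.2 = (qPoch t N * qPoch t (N + 1))⁻¹ := by
  induction N with
  | zero =>
    have := one_sub_pow_succ_ne_zero ht 0
    simp [antidiagTerm, qPoch_succ]
  | succ N ih =>
    have hY : (1 - t ^ (N + 1)) * (1 - t ^ (N + 2)) ≠ 0 :=
      mul_ne_zero (one_sub_pow_succ_ne_zero ht N) (one_sub_pow_succ_ne_zero ht (N + 1))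
    rw [← mul_right_inj' hY, mul_sum, sum_congr rfl fun p hp =>
      antidiagTerm_recurrence ht (HasAntidiagonal.mem_antidiagonal.1 hp), sum_add_distrib,
      Nat.sum_antidiagonal_succ, Nat.sum_antidiagonal_succ']
    simp only [if_true, Nat.succ_ne_zero, if_false, zero_add, Nat.add_sub_cancel, ← sum_add_distrib]
    rw [sum_congr rfl fun p _ => show _ = antidiagTerm t p.1 p.2 by ring, ih,
      qPoch_succ t (N + 1), qPoch_succ t N]
    have := qPoch_ne_zero ht N
    have := one_sub_pow_succ_ne_zero ht N
    have := one_sub_pow_succ_ne_zero ht (N + 1)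
    field_simp

lemma sum_antidiagonal_antidiagTerm_succ_fst (ht : ∀ j, t ^ (j + 1) ≠ 1) (n : ℕ) :
    ∑ p ∈ antidiagonal n, antidiagTerm t (p.1 + 1) p.2 =
      (1 - t ^ ((n + 1) * (n + 2))) / (qPoch t (n + 1) * qPoch t (n + 2)) := by
  have h := sum_antidiagonal_antidiagTerm ht (n + 1)
  rw [Nat.sum_antidiagonal_succ] at h
  rw [sub_div, one_div, ← h]
  simp [antidiagTerm]

end qPochhammer

lemma qFactorial_eq_qPoch_div (t : ℂ) (k : ℕ) : qFactorial t k = qPoch t k / (1 - t) ^ k := by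
  rw [qFactorial, qPoch, prod_div_distrib, prod_const, card_range]

abbrev AntitoneTuple (n : ℕ) : Type := {f : Fin n → ℕ // Antitone f}

def tupleWeight {n : ℕ} (f : Fin n → ℕ) : ℕ := ∑ i : Fin n, (i.1 + 1) * f i

noncomputable def tupleTerm (q : ℂ) {n : ℕ} (f : Fin n → ℕ) : ℂ :=
  Cpart q f * q ^ (4 * tupleWeight f)

def glue (m b v : ℕ) (x : Fin b → ℕ) : Fin m → ℕ :=
  fun i => if h : i.1 < b then x ⟨i, h⟩ + v + 1 else v

section glue

variable {m b v : ℕ} {x : Fin b → ℕ}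

lemma glue_of_lt {i : Fin m} (h : i.1 < b) : glue m b v x i = x ⟨i, h⟩ + v + 1 := dif_pos h

lemma glue_of_le {i : Fin m} (h : b ≤ i.1) : glue m b v x i = v := dif_neg (by omega)

lemma antitone_glue (hx : Antitone x) : Antitone (glue m b v x) := by
  intro i j hij
  have hij' : i.1 ≤ j.1 := hij
  by_cases hj : j.1 < b
  · rw [glue_of_lt (hij'.trans_lt hj), glue_of_lt hj]
    have := hx (show (⟨i, hij'.trans_lt hj⟩ : Fin b) ≤ ⟨j, hj⟩ from hij)
    omega
  · rw [glue_of_le (not_lt.1 hj)]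
    by_cases hi : i.1 < b
    · rw [glue_of_lt hi]; omega
    · rw [glue_of_le (not_lt.1 hi)]

lemma card_filter_glue_eq_base (hb : b ≤ m) : #{i | glue m b v x i = v} = m - b := by
  have : univ.filter (fun i : Fin m => glue m b v x i = v) =
      univ.filter (fun i : Fin m => ¬ i.1 < b) := by
    refine filter_congr fun i _ => ?_
    by_cases h : i.1 < b
    · simp only [glue_of_lt h, h, not_true_eq_false, iff_false]; omega
    · simp [glue_of_le (not_lt.1 h), h]
  rw [this, filter_not, card_sdiff_of_subset (filter_subset _ _), Fin.card_filter_val_lt]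
  simp [hb]

lemma card_filter_glue_eq_add (hb : b ≤ m) (c : ℕ) :
    #{i | glue m b v x i = c + (v + 1)} = #{j | x j = c} := by
  refine (card_bij (fun j _ => Fin.castLE hb j) (fun j hj => ?_)
    (fun _ _ _ _ h => Fin.castLE_injective hb h) (fun i hi => ?_)).symm
  · simp only [mem_filter, mem_univ, true_and] at hj ⊢
    rw [glue_of_lt (by simp)]
    simp only [Fin.val_castLE, Fin.eta, hj]; omega
  · simp only [mem_filter, mem_univ, true_and] at hi
    have hib : i.1 < b := by
      by_contra h
      rw [glue_of_le (not_lt.1 h)] at hi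
      omega
    rw [glue_of_lt hib] at hi
    exact ⟨⟨i, hib⟩, by simp only [mem_filter, mem_univ, true_and]; omega, rfl⟩

lemma image_glue (hb : b < m) :
    image (glue m b v x) univ = insert v ((image x univ).image (· + (v + 1))) := by
  ext u
  simp only [mem_insert, mem_image, mem_univ, true_and]
  constructor
  · rintro ⟨i, rfl⟩
    by_cases h : i.1 < b
    · exact .inr ⟨_, ⟨⟨i, h⟩, rfl⟩, (glue_of_lt h).symm⟩
    · exact .inl (glue_of_le (not_lt.1 h))
  · rintro (rfl | ⟨_, ⟨j, rfl⟩, rfl⟩)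
    · exact ⟨⟨b, hb⟩, glue_of_le le_rfl⟩
    · refine ⟨Fin.castLE hb.le j, ?_⟩
      rw [glue_of_lt (by simp)]
      simp only [Fin.val_castLE, Fin.eta]
      omega

lemma Cpart_glue (q : ℂ) (hb : b < m) :
    Cpart q (glue m b v x) = (qFactorial (q ^ 2) (m - b))⁻¹ * Cpart q x := by
  have hv : v ∉ (image x univ).image (· + (v + 1)) := by
    simp only [mem_image, mem_univ, true_and, not_exists]
    omega
  rw [Cpart, image_glue hb, prod_insert hv, card_filter_glue_eq_base hb.le,
    prod_image fun _ _ _ _ h => by simpa using h, Cpart]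
  simp only [card_filter_glue_eq_add hb.le]

lemma two_mul_sum_range_add_one (b : ℕ) : 2 * ∑ i ∈ range b, (i + 1) = b * (b + 1) := by
  induction b with
  | zero => simp
  | succ b ih => rw [sum_range_succ, mul_add, ih]; ring

lemma two_mul_tupleWeight_glue (hb : b ≤ m) :
    2 * tupleWeight (glue m b v x) = 2 * tupleWeight x + b * (b + 1) + v * (m * (m + 1)) := by
  set y : ℕ → ℕ := fun i => if h : i < b then x ⟨i, h⟩ + 1 else 0
  have hglue : ∀ i : Fin m, glue m b v x i = v + y i := by
    intro i
    by_cases h : i.1 < b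
    · simp only [glue_of_lt h, h, ↓reduceDIte, y]; omega
    · simp [glue_of_le (not_lt.1 h), y, h]
  have hW : tupleWeight (glue m b v x) =
      v * ∑ i ∈ range m, (i + 1) + ∑ i ∈ range b, (i + 1) * y i := by
    rw [tupleWeight, sum_congr rfl fun i _ => by rw [hglue],
      Fin.sum_univ_eq_sum_range (fun i => (i + 1) * (v + y i)), mul_sum,
      sum_subset (f := fun i => (i + 1) * y i) (range_subset_range.2 hb)
        fun i _ hi => by simp_all [y], ← sum_add_distrib]
    exact sum_congr rfl fun i _ => by ring
  have hWx : ∑ i ∈ range b, (i + 1) * y i = tupleWeight x + ∑ i ∈ range b, (i + 1) := by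
    rw [tupleWeight, ← Fin.sum_univ_eq_sum_range (fun i => (i + 1) * y i),
      ← Fin.sum_univ_eq_sum_range (fun i => i + 1), ← sum_add_distrib]
    exact sum_congr rfl fun i _ => by simp only [Fin.is_lt, ↓reduceDIte, Fin.eta, y]; ring
  rw [hW, hWx, mul_add, mul_add, two_mul_sum_range_add_one, mul_left_comm,
    two_mul_sum_range_add_one]
  ring

end glue

lemma tupleTerm_glue (q : ℂ) {m b : ℕ} (v : ℕ) (x : Fin b → ℕ) (hb : b < m) :
    tupleTerm q (glue m b v x) = ((q ^ 2) ^ (m * (m + 1))) ^ v *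
      ((qFactorial (q ^ 2) (m - b))⁻¹ * (q ^ 2) ^ (b * (b + 1)) * tupleTerm q x) := by
  have h4 : ∀ {k} (f : Fin k → ℕ), q ^ (4 * tupleWeight f) = (q ^ 2) ^ (2 * tupleWeight f) :=
    fun f => by rw [← pow_mul]; ring_nf
  rw [tupleTerm, tupleTerm, Cpart_glue q hb, h4, h4 x, two_mul_tupleWeight_glue hb.le,
    pow_add, pow_add, mul_comm v, pow_mul]
  ring

def glueMap (n : ℕ) (s : Σ p : antidiagonal n, ℕ × AntitoneTuple p.1.2) : AntitoneTuple (n + 1) :=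
  ⟨glue (n + 1) s.1.1.2 s.2.1 s.2.2.1, antitone_glue s.2.2.2⟩

lemma glueMap_injective (n : ℕ) : Function.Injective (glueMap n) := by
  rintro ⟨⟨⟨a, b⟩, hab⟩, v, x, hx⟩ ⟨⟨⟨a', b'⟩, hab'⟩, v', x', hx'⟩ h
  have hg : glue (n + 1) b v x = glue (n + 1) b' v' x' := congrArg Subtype.val h
  rw [HasAntidiagonal.mem_antidiagonal] at hab hab'
  obtain rfl : v = v' := by
    have := congrFun hg (Fin.last n)
    rwa [glue_of_le (by rw [Fin.val_last]; omega), glue_of_le (by rw [Fin.val_last]; omega)] at this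
  obtain rfl : b = b' := by
    have := congrArg (fun f => #{i | f i = v}) hg
    simp only [card_filter_glue_eq_base (by omega : b ≤ n + 1),
      card_filter_glue_eq_base (by omega : b' ≤ n + 1)] at this
    omega
  obtain rfl : a = a' := by omega
  obtain rfl : x = x' := funext fun j => by
    have := congrFun hg (Fin.castLE (show b ≤ n + 1 by omega) j)
    rw [glue_of_lt (by simp), glue_of_lt (by simp)] at this
    simpa using this
  rfl

lemma glueMap_surjective (n : ℕ) : Function.Surjective (glueMap n) := by
  rintro ⟨y, hy⟩
  set v := y (Fin.last n)
  set b := #{i | v < y i}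
  have hlt : ∀ i : Fin (n + 1), i.1 < b ↔ v < y i :=
    fun i => Fin.lt_card_filter_univ_iff_apply_of_imp _ fun _ _ hji hi => hi.trans_le (hy hji)
  have hbn : b ≤ n := by
    have := (hlt (Fin.last n)).not.2 (lt_irrefl v)
    simp only [Fin.val_last] at this
    omega
  refine ⟨⟨⟨(n - b, b), by simp only [HasAntidiagonal.mem_antidiagonal]; omega⟩, v,
    fun j => y (Fin.castLE (show b ≤ n + 1 by omega) j) - (v + 1),
    fun i j hij => Nat.sub_le_sub_right (hy hij) _⟩,
    Subtype.ext (funext fun i => ?_)⟩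
  by_cases h : i.1 < b
  · have := (hlt i).1 h
    simp only [glueMap, glue_of_lt h]
    simp only [Fin.castLE_mk, Fin.eta]
    omega
  · have := (hlt i).not.1 h
    have := hy (Fin.le_last i)
    simp only [glueMap, glue_of_le (not_lt.1 h)]
    omega

noncomputable def glueEquiv (n : ℕ) :
    (Σ p : antidiagonal n, ℕ × AntitoneTuple p.1.2) ≃ AntitoneTuple (n + 1) :=
  .ofBijective (glueMap n) ⟨glueMap_injective n, glueMap_surjective n⟩

lemma tupleTerm_glueEquiv (q : ℂ) {n : ℕ} (s : Σ p : antidiagonal n, ℕ × AntitoneTuple p.1.2) :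
    tupleTerm q (glueEquiv n s).1 = ((q ^ 2) ^ ((n + 1) * (n + 2))) ^ s.2.1 *
      ((qFactorial (q ^ 2) (s.1.1.1 + 1))⁻¹ * (q ^ 2) ^ (s.1.1.2 * (s.1.1.2 + 1)) *
        tupleTerm q s.2.2.1) := by
  obtain ⟨⟨⟨a, b⟩, hab⟩, v, x⟩ := s
  rw [HasAntidiagonal.mem_antidiagonal] at hab
  show tupleTerm q (glue (n + 1) b v x.1) = _
  rw [tupleTerm_glue (b := b) q v x.1 (by omega), show n + 1 - b = a + 1 by omega]

variable {q : ℂ}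

lemma norm_sq_pow_lt_one (hq : ‖q‖ < 1) {k : ℕ} (hk : k ≠ 0) : ‖(q ^ 2) ^ k‖ < 1 := by
  rw [norm_pow, norm_pow]
  exact pow_lt_one₀ (by positivity) (pow_lt_one₀ (norm_nonneg q) hq two_ne_zero) hk

lemma sq_pow_ne_one (hq : ‖q‖ < 1) {k : ℕ} (hk : k ≠ 0) : (q ^ 2) ^ k ≠ 1 := fun h => by
  simpa [h] using norm_sq_pow_lt_one hq hk

lemma summable_norm_tupleTerm_glueEquiv (hq : ‖q‖ < 1) (n : ℕ)
    (hs : ∀ b ≤ n, Summable fun x : AntitoneTuple b => ‖tupleTerm q x.1‖) :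
    Summable fun s => ‖tupleTerm q (glueEquiv n s).1‖ := by
  have hfib : ∀ p, Summable fun c : ℕ × AntitoneTuple p.1.2 =>
      ‖tupleTerm q (glueEquiv n ⟨p, c⟩).1‖ := by
    intro p
    set c := (qFactorial (q ^ 2) (p.1.1 + 1))⁻¹ * (q ^ 2) ^ (p.1.2 * (p.1.2 + 1))
    have hb : p.1.2 ≤ n := by have := HasAntidiagonal.mem_antidiagonal.1 p.2; omega
    simp only [tupleTerm_glueEquiv]
    exact Summable.mul_norm (f := fun v => ((q ^ 2) ^ ((n + 1) * (n + 2))) ^ v)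
      (g := fun x : AntitoneTuple p.1.2 => c * tupleTerm q x.1)
      (summable_norm_geometric_of_norm_lt_one (norm_sq_pow_lt_one hq (by positivity)))
      (by simpa only [norm_mul] using (hs _ hb).mul_left ‖c‖)
  exact (summable_sigma_of_nonneg fun _ => norm_nonneg _).2 ⟨hfib, .of_finite⟩

lemma summable_norm_tupleTerm (hq : ‖q‖ < 1) (n : ℕ) :
    Summable fun x : AntitoneTuple n => ‖tupleTerm q x.1‖ := by
  induction n using Nat.strong_induction_on with
  | _ n ih =>
  rcases n with _ | n
  · exact .of_finite
  · exact (glueEquiv n).summable_iff.1 <|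
      summable_norm_tupleTerm_glueEquiv hq n fun b hb => ih b (Nat.lt_succ_of_le hb)

lemma tsum_tupleTerm_succ (hq : ‖q‖ < 1) (n : ℕ) :
    ∑' x : AntitoneTuple (n + 1), tupleTerm q x.1 = (1 - (q ^ 2) ^ ((n + 1) * (n + 2)))⁻¹ *
      ∑ p ∈ antidiagonal n, (qFactorial (q ^ 2) (p.1 + 1))⁻¹ * (q ^ 2) ^ (p.2 * (p.2 + 1)) *
        ∑' x : AntitoneTuple p.2, tupleTerm q x.1 := by
  have hs := summable_norm_tupleTerm_glueEquiv hq n fun b _ => summable_norm_tupleTerm hq b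
  rw [← (glueEquiv n).tsum_eq, hs.of_norm.tsum_sigma, tsum_fintype,
    ← sum_coe_sort (antidiagonal n), mul_sum]
  refine sum_congr rfl fun p _ => ?_
  set c := (qFactorial (q ^ 2) (p.1.1 + 1))⁻¹ * (q ^ 2) ^ (p.1.2 * (p.1.2 + 1))
  simp only [tupleTerm_glueEquiv]
  rw [← tsum_mul_tsum_of_summable_norm (f := fun v => ((q ^ 2) ^ ((n + 1) * (n + 2))) ^ v)
      (g := fun x : AntitoneTuple p.1.2 => c * tupleTerm q x.1)
      (summable_norm_geometric_of_norm_lt_one (norm_sq_pow_lt_one hq (by positivity)))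
      (by simpa only [norm_mul] using (summable_norm_tupleTerm hq _).mul_left ‖c‖),
    tsum_geometric_of_norm_lt_one (norm_sq_pow_lt_one hq (by positivity)), tsum_mul_left]

lemma tsum_tupleTerm (hq : ‖q‖ < 1) (n : ℕ) :
    ∑' x : AntitoneTuple n, tupleTerm q x.1 =
      (1 - q ^ 2) ^ (n + 1) / (qPoch (q ^ 2) n * qPoch (q ^ 2) (n + 1)) := by
  have ht : ∀ j, (q ^ 2) ^ (j + 1) ≠ 1 := fun j => sq_pow_ne_one hq j.succ_ne_zero
  have h1t : 1 - q ^ 2 ≠ 0 := sub_ne_zero.2 (by simpa using (ht 0).symm)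
  induction n using Nat.strong_induction_on with
  | _ n ih =>
  rcases n with _ | n
  · rw [tsum_eq_single ⟨Fin.elim0, fun i => i.elim0⟩ fun x hx => (hx (Subsingleton.elim _ _)).elim]
    simp [tupleTerm, Cpart, tupleWeight, qPoch_succ, h1t]
  · have hterm : ∀ p ∈ antidiagonal n, (qFactorial (q ^ 2) (p.1 + 1))⁻¹ *
        (q ^ 2) ^ (p.2 * (p.2 + 1)) * ∑' x : AntitoneTuple p.2, tupleTerm q x.1 =
          (1 - q ^ 2) ^ (n + 2) * antidiagTerm (q ^ 2) (p.1 + 1) p.2 := by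
      rintro ⟨a, b⟩ hab
      rw [HasAntidiagonal.mem_antidiagonal] at hab
      subst hab
      have := qPoch_ne_zero ht (a + 1)
      have := qPoch_ne_zero ht b
      have := qPoch_ne_zero ht (b + 1)
      rw [ih b (by omega), qFactorial_eq_qPoch_div, antidiagTerm]
      field_simp
      ring
    have hr : 1 - (q ^ 2) ^ ((n + 1) * (n + 2)) ≠ 0 :=
      sub_ne_zero.2 (sq_pow_ne_one hq (by positivity)).symm
    have := qPoch_ne_zero ht (n + 1)
    have := qPoch_ne_zero ht (n + 2)
    rw [tsum_tupleTerm_succ hq, sum_congr rfl hterm, ← mul_sum,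
      sum_antidiagonal_antidiagTerm_succ_fst ht]
    field_simp

theorem stmt5_general (q : ℂ) (hq : ‖q‖ < 1) (n : ℕ) :
    Summable (fun lam : {f : Fin n → ℕ // Antitone f} =>
      Cpart q lam.1 * q ^ (4 * ∑ i : Fin n, (i.1 + 1) * lam.1 i)) ∧
    (qFactorial (q ^ 2) n * qFactorial (q ^ 2) (n + 1))⁻¹ =
      (1 - q ^ 2) ^ n * ∑' lam : {f : Fin n → ℕ // Antitone f},
        Cpart q lam.1 * q ^ (4 * ∑ i : Fin n, (i.1 + 1) * lam.1 i) := by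
  have ht : ∀ j, (q ^ 2) ^ (j + 1) ≠ 1 := fun j => sq_pow_ne_one hq j.succ_ne_zero
  refine ⟨(summable_norm_tupleTerm hq n).of_norm, ?_⟩
  change _ = _ * ∑' x : AntitoneTuple n, tupleTerm q x.1
  have := qPoch_ne_zero ht n
  have := qPoch_ne_zero ht (n + 1)
  have := sub_ne_zero.2 (ht 0).symm
  rw [tsum_tupleTerm hq n, qFactorial_eq_qPoch_div, qFactorial_eq_qPoch_div]
  field_simp

/-- For `|q| < 1` and `n ≥ 1`, the family
`λ ↦ C_λ(q)·q^{4(λ₁ + 2λ₂ + ⋯ + nλ_n)}`, indexed by weakly decreasing `n`-tuples of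
nonnegative integers, is summable, and
`1/((n)_{q²}!·(n+1)_{q²}!) = (1 − q²)ⁿ · Σ_λ C_λ(q)·q^{4(λ₁ + 2λ₂ + ⋯ + nλ_n)}`. -/
theorem stmt5 (q : ℂ) (hq : ‖q‖ < 1) (n : ℕ) (hn : 1 ≤ n) :
    Summable (fun lam : {f : Fin n → ℕ // Antitone f} =>
      Cpart q lam.1 * q ^ (4 * ∑ i : Fin n, (i.1 + 1) * lam.1 i)) ∧
    (qFactorial (q ^ 2) n * qFactorial (q ^ 2) (n + 1))⁻¹ =
      (1 - q ^ 2) ^ n * ∑' lam : {f : Fin n → ℕ // Antitone f},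
        Cpart q lam.1 * q ^ (4 * ∑ i : Fin n, (i.1 + 1) * lam.1 i) :=
  stmt5_general q hq n
end

section
/- Suppose R: ℕ → A satisfies R(0) = 1 and the recurrence n·R(n) = Σ_{k=1}^{n} R(n−k)·I(k) for all n ≥ 1. Then for every n ≥ 1, R(n) = Σ_{m=1}^{n} Σ_{(j₁,…,j_m)} C₊(j₁,…,j_m) · I(j₁)·I(j₂)⋯I(j_m), where the inner sum runs over all m-tuples of positive integers with j₁ + ⋯ + j_m = n and C₊(j₁,…,j_m) = 1/(j₁·(j₁+j₂)·(j₁+j₂+j₃)⋯(j₁+⋯+j_m)). -/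
/-!
Both sides satisfy the same recurrence, which determines a sequence from its value at `0`.
For the right-hand side, split a composition of `n` into its last block `k` and a composition
of `n - k`: the coefficient `C₊` picks up exactly one new factor `1 / n`, and the product of
the `I`'s picks up a right factor `I k`.
-/

open Finset

-- The paper's `C₊(j₁,…,j_m)`, for `b = [j₁, …, j_m]`.
noncomputable def invPrefixSumProd (b : List ℕ) : ℚ :=
  ∏ i ∈ range b.length, ((b.take (i + 1)).sum : ℚ)⁻¹

lemma invPrefixSumProd_append_singleton (b : List ℕ) (k : ℕ) :
    invPrefixSumProd (b ++ [k]) = invPrefixSumProd b * ((b.sum + k : ℕ) : ℚ)⁻¹ := by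
  rw [invPrefixSumProd, List.length_append, List.length_singleton, prod_range_succ,
    List.take_of_length_le (by simp)]
  congr 1
  · refine prod_congr rfl fun i hi => ?_
    rw [List.take_append_of_le_length (by simpa using mem_range.1 hi)]
  · simp

namespace Composition

instance : Subsingleton (Composition 0) :=
  ⟨fun c d => Composition.ext <| by rw [c.blocks_eq_nil.2 rfl, d.blocks_eq_nil.2 rfl]⟩

lemma sum_zero {M : Type*} [AddCommMonoid M] (f : List ℕ → M) :
    ∑ c : Composition 0, f c.blocks = f [] := by
  rw [Fintype.sum_subsingleton _ (ones 0)]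
  rfl

lemma heq_of_blocks_eq {m m' : ℕ} {c : Composition m} {c' : Composition m'}
    (h : c.blocks = c'.blocks) : c ≍ c' := by
  obtain rfl : m = m' := c.blocks_sum.symm.trans (h ▸ c'.blocks_sum)
  exact heq_of_eq (Composition.ext h)

lemma sum_eq_sum_Icc_sum_append_singleton {M : Type*} [AddCommMonoid M] (f : List ℕ → M)
    {n : ℕ} (hn : 1 ≤ n) :
    ∑ c : Composition n, f c.blocks =
      ∑ k ∈ Icc 1 n, ∑ c : Composition (n - k), f (c.blocks ++ [k]) := by
  have hne (c : Composition n) : c.blocks ≠ [] := by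
    rw [Ne, c.blocks_eq_nil]; omega
  have hsum (c : Composition n) : c.blocks.dropLast.sum + c.blocks.getLast (hne c) = n := by
    conv_rhs => rw [← c.blocks_sum, ← List.dropLast_append_getLast (hne c)]
    simp
  rw [sum_sigma']
  refine sum_bij'
    (fun c _ => ⟨c.blocks.getLast (hne c),
      ⟨c.blocks.dropLast, fun h => c.blocks_pos ((List.dropLast_sublist _).subset h),
        by have := hsum c; omega⟩⟩)
    (fun p hp => ⟨p.2.blocks ++ [p.1], ?pos, ?sum⟩) ?_ (fun _ _ => mem_univ _) ?_ ?_ ?_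
  case pos =>
    intro i hi
    rcases List.mem_append.1 hi with h | h
    · exact p.2.blocks_pos h
    · rw [List.mem_singleton.1 h]
      exact (mem_Icc.1 (mem_sigma.1 hp).1).1
  case sum =>
    have := (mem_Icc.1 (mem_sigma.1 hp).1).2
    simp only [List.sum_append, p.2.blocks_sum, List.sum_singleton]
    omega
  · intro c _
    simp only [mem_sigma, mem_univ, and_true, mem_Icc]
    have := hsum c
    exact ⟨c.blocks_pos (List.getLast_mem _), by omega⟩
  · intro c _
    exact Composition.ext (List.dropLast_append_getLast _)
  · rintro ⟨k, c⟩ _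
    exact Sigma.ext List.getLast_concat (heq_of_blocks_eq List.dropLast_concat)
  · intro c _
    simp only [List.dropLast_append_getLast]

end Composition

section Recurrence

variable {A : Type*} [Semiring A] [Algebra ℚ A]

lemma eq_of_smul_eq_sum_mul (I R S : ℕ → A) (h0 : R 0 = S 0)
    (hR : ∀ n : ℕ, 1 ≤ n → (n : ℚ) • R n = ∑ k ∈ Icc 1 n, R (n - k) * I k)
    (hS : ∀ n : ℕ, 1 ≤ n → (n : ℚ) • S n = ∑ k ∈ Icc 1 n, S (n - k) * I k) :
    R = S := by
  funext n
  induction n using Nat.strong_induction_on with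
  | _ n ih =>
    rcases Nat.eq_zero_or_pos n with rfl | hn
    · exact h0
    · have hn0 : (n : ℚ) ≠ 0 := by positivity
      have hsmul : (n : ℚ) • R n = (n : ℚ) • S n := by
        rw [hR n hn, hS n hn]
        refine sum_congr rfl fun k hk => ?_
        rw [ih (n - k) (by have := (mem_Icc.1 hk).1; omega)]
      simpa only [inv_smul_smul₀ hn0] using congrArg ((n : ℚ)⁻¹ • ·) hsmul

noncomputable def compositionExpansion (I : ℕ → A) (n : ℕ) : A :=
  ∑ c : Composition n, invPrefixSumProd c.blocks • (c.blocks.map I).prod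

lemma compositionExpansion_zero (I : ℕ → A) : compositionExpansion I 0 = 1 := by
  rw [compositionExpansion, Composition.sum_zero fun b => invPrefixSumProd b • (b.map I).prod]
  simp [invPrefixSumProd]

lemma natCast_smul_compositionExpansion (I : ℕ → A) {n : ℕ} (hn : 1 ≤ n) :
    (n : ℚ) • compositionExpansion I n =
      ∑ k ∈ Icc 1 n, compositionExpansion I (n - k) * I k := by
  rw [compositionExpansion, Composition.sum_eq_sum_Icc_sum_append_singleton
    (fun b => invPrefixSumProd b • (b.map I).prod) hn]
  simp only [compositionExpansion, smul_sum, sum_mul]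
  refine sum_congr rfl fun k hk => sum_congr rfl fun c _ => ?_
  have hk : n - k + k = n := Nat.sub_add_cancel (mem_Icc.1 hk).2
  have hn0 : (n : ℚ) ≠ 0 := by positivity
  rw [invPrefixSumProd_append_singleton, c.blocks_sum, hk, List.map_append, List.prod_append,
    List.map_singleton, List.prod_singleton, smul_smul, mul_left_comm, mul_inv_cancel₀ hn0,
    mul_one, smul_mul_assoc]

end Recurrence

/-- Let `A` be an associative unital `ℚ`-algebra and `I(1), I(2), …` an
arbitrary sequence in `A`.  If `R : ℕ → A` satisfies `R(0) = 1` and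
`n·R(n) = Σ_{k=1}^{n} R(n−k)·I(k)` for all `n ≥ 1`, then for every `n ≥ 1`,
`R(n) = Σ_{m=1}^{n} Σ_{j₁+⋯+j_m=n, jᵢ≥1} C₊(j₁,…,j_m)·I(j₁)⋯I(j_m)`, where
`C₊(j₁,…,j_m) = 1/(j₁(j₁+j₂)⋯(j₁+⋯+j_m))`. -/
theorem stmt6 (A : Type*) [Ring A] [Algebra ℚ A] (I : ℕ → A) (R : ℕ → A)
    (hR0 : R 0 = 1)
    (hrec : ∀ n : ℕ, 1 ≤ n → (n : ℚ) • R n = ∑ k ∈ Finset.Icc 1 n, R (n - k) * I k)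
    (n : ℕ) (hn : 1 ≤ n) :
    R n = ∑ m ∈ Finset.Icc 1 n,
      ∑ c ∈ Finset.univ.filter (fun c : Composition n => c.length = m),
        (∏ i ∈ Finset.range c.length, (((c.blocks.take (i + 1)).sum : ℚ))⁻¹) •
          (c.blocks.map I).prod := by
  have hR : R = compositionExpansion I :=
    eq_of_smul_eq_sum_mul I R _ (hR0.trans (compositionExpansion_zero I).symm) hrec
      fun _ => natCast_smul_compositionExpansion I
  rw [hR, sum_fiberwise_of_maps_to fun c _ => mem_Icc.2 ⟨c.length_pos_of_pos hn, c.length_le⟩]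
  rfl
end
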